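/- arXiv:1710.06095 — 4 statements merged into one kernel-verified Lean document; each statement's English description precedes it below -/
import Mathlib

section
/- Let s₂ ≥ 1 be an integer and e₀ ∈ {2, 3}. Let Σ = Σ₂ ⊔ {z} where Σ₂ has cardinality s₂, and define e : Σ → ℤ by e ≡ 1 on Σ₂ and e(z) = e₀. Then G(Σ, e) is cyclic of order e₀·s₂ + 1, generated by Ψ_z; for any 𝔰 ∈ Σ₂ one has Ψ_𝔰 = e₀·Ψ_z and Ψ_z = −s₂·Ψ_𝔰, so that G(Σ, e) is also generated by Ψ_𝔰. Moreover, every bijection τ : Σ → Σ satisfying e ∘ τ = e induces the identity automorphism of G(Σ, e) (the homomorphism determined by Ψ_s ↦ Ψ_{τ(s)} is the identity). -/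
/-!
Every relation `e s • Ψ s = e t • Ψ t` with `s ∈ Σ₂`, `t = z` reads `Ψ s = e₀ • Ψ z`, so `Ψ z`
generates and the relation `∑ Ψ s = 0` becomes `(e₀ s₂ + 1) • Ψ z = 0`. Conversely `Ψ s ↦ e₀`
(`s ∈ Σ₂`), `Ψ z ↦ 1` respects all relations, giving a map onto `ZMod (e₀ s₂ + 1)` that sends
`Ψ z` to `1`; hence `Ψ z` has order exactly `e₀ s₂ + 1`. A weight-preserving `τ` either fixes `z`
or forces `e₀ = 1`, in which case all `Ψ s` coincide; either way `T` fixes the generator `Ψ z`.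
-/

/-- The subgroup of relations: `e s • ψ s - e t • ψ t` for all `s t`, together with
`∑ s, ψ s`. -/
noncomputable def relSub {S : Type*} [Fintype S] (e : S → ℤ) : AddSubgroup (S →₀ ℤ) :=
  AddSubgroup.closure
    ({x | ∃ s t : S, x = Finsupp.single s (e s) - Finsupp.single t (e t)} ∪
      {∑ s : S, Finsupp.single s 1})

/-- `G(Σ, e)`: the quotient of the free abelian group on `Σ` by the relations. -/
abbrev CompGrp {S : Type*} [Fintype S] (e : S → ℤ) : Type _ :=
  (S →₀ ℤ) ⧸ relSub e

/-- `Ψ s`: the image of the basis element `ψ s` in `G(Σ, e)`. -/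
noncomputable def Psi {S : Type*} [Fintype S] (e : S → ℤ) (s : S) : CompGrp e :=
  QuotientAddGroup.mk (Finsupp.single s 1)

namespace CompGrp

section General

variable {S : Type*} [Fintype S] (e : S → ℤ)

theorem zsmul_Psi_eq_zsmul_Psi (s t : S) : e s • Psi e s = e t • Psi e t := by
  rw [← sub_eq_zero, Psi, Psi, ← QuotientAddGroup.mk_zsmul, ← QuotientAddGroup.mk_zsmul,
    ← QuotientAddGroup.mk_sub, QuotientAddGroup.eq_zero_iff, Finsupp.smul_single_one,
    Finsupp.smul_single_one]
  exact AddSubgroup.subset_closure (Or.inl ⟨s, t, rfl⟩)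

theorem sum_Psi_eq_zero : ∑ s, Psi e s = 0 := by
  have h : (QuotientAddGroup.mk (∑ s : S, Finsupp.single s (1 : ℤ)) : CompGrp e) = 0 :=
    (QuotientAddGroup.eq_zero_iff _).2 (AddSubgroup.subset_closure (Or.inr rfl))
  rwa [← QuotientAddGroup.mk'_apply, map_sum] at h

theorem closure_range_Psi : AddSubgroup.closure (Set.range (Psi e)) = ⊤ := by
  refine AddSubgroup.eq_top_iff' _ |>.2 fun x => ?_
  obtain ⟨a, rfl⟩ := QuotientAddGroup.mk'_surjective (relSub e) x
  induction a using Finsupp.induction_linear with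
  | zero => exact zero_mem _
  | add f g hf hg => exact map_add (QuotientAddGroup.mk' (relSub e)) f g ▸ add_mem hf hg
  | single s m =>
    rw [← Finsupp.smul_single_one, map_zsmul]
    exact zsmul_mem (AddSubgroup.subset_closure (Set.mem_range_self s)) m

variable {A : Type*} [AddCommGroup A] (f : S → A)

theorem relSub_le_ker (hf : ∀ s t, e s • f s = e t • f t) (hsum : ∑ s, f s = 0) :
    relSub e ≤ (Finsupp.liftAddHom fun s => zmultiplesHom A (f s)).ker := by
  rw [relSub, AddSubgroup.closure_le]
  rintro x (⟨s, t, rfl⟩ | rfl)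
  · rw [SetLike.mem_coe, AddMonoidHom.mem_ker, map_sub, Finsupp.liftAddHom_apply_single,
      Finsupp.liftAddHom_apply_single, zmultiplesHom_apply, zmultiplesHom_apply, hf s t,
      sub_self]
  · simp [hsum]

noncomputable def lift (hf : ∀ s t, e s • f s = e t • f t) (hsum : ∑ s, f s = 0) :
    CompGrp e →+ A :=
  QuotientAddGroup.lift _ _ (relSub_le_ker e f hf hsum)

@[simp]
theorem lift_Psi (hf : ∀ s t, e s • f s = e t • f t) (hsum : ∑ s, f s = 0) (s : S) :
    lift e f hf hsum (Psi e s) = f s := by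
  simp [lift, Psi]

end General

section OneHeavyPoint

variable (ι : Type*) [Fintype ι] (e₀ : ℕ)

abbrev weightOneExceptInr : ι ⊕ Unit → ℤ := Sum.elim (fun _ => 1) (fun _ => (e₀ : ℤ))

local notation "𝔢" => weightOneExceptInr ι e₀

variable {ι e₀}

theorem Psi_inl (i : ι) : Psi 𝔢 (.inl i) = e₀ • Psi 𝔢 (.inr ()) := by
  simpa using zsmul_Psi_eq_zsmul_Psi 𝔢 (.inl i) (.inr ())

variable (ι e₀)

theorem nsmul_Psi_inr_eq_zero : (e₀ * Fintype.card ι + 1) • Psi 𝔢 (.inr ()) = 0 := by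
  have h := sum_Psi_eq_zero 𝔢
  simp only [Fintype.sum_sum_type, Psi_inl, Finset.sum_const, Finset.card_univ,
    Fintype.univ_unit, Finset.sum_singleton] at h
  rwa [succ_nsmul, mul_nsmul]

theorem zmultiples_Psi_inr_eq_top : AddSubgroup.zmultiples (Psi 𝔢 (.inr ())) = ⊤ := by
  rw [eq_top_iff, ← closure_range_Psi, AddSubgroup.closure_le]
  rintro _ ⟨i | ⟨⟩, rfl⟩
  · rw [SetLike.mem_coe, Psi_inl]
    exact AddSubgroup.nsmul_mem _ (AddSubgroup.mem_zmultiples _) _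
  · exact AddSubgroup.mem_zmultiples _

noncomputable def toZMod : CompGrp 𝔢 →+ ZMod (e₀ * Fintype.card ι + 1) :=
  have hweight (s : ι ⊕ Unit) :
      𝔢 s • Sum.elim (fun _ => (e₀ : ZMod (e₀ * Fintype.card ι + 1))) (fun _ => 1) s = e₀ := by
    rcases s with i | ⟨⟩ <;> simp
  lift 𝔢 (Sum.elim (fun _ => (e₀ : ZMod (e₀ * Fintype.card ι + 1))) (fun _ => 1))
    (fun s t => (hweight s).trans (hweight t).symm)
    (by simp only [Fintype.sum_sum_type, Sum.elim_inl, Sum.elim_inr, Finset.sum_const,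
          Finset.card_univ, nsmul_eq_mul, mul_comm, Finset.univ_unique, Finset.card_singleton,
          one_smul]
        exact_mod_cast ZMod.natCast_self (e₀ * Fintype.card ι + 1))

theorem toZMod_Psi_inr : toZMod ι e₀ (Psi 𝔢 (.inr ())) = 1 := by
  rw [toZMod, lift_Psi]
  rfl

theorem addOrderOf_Psi_inr : addOrderOf (Psi 𝔢 (.inr ())) = e₀ * Fintype.card ι + 1 := by
  refine Nat.dvd_antisymm (addOrderOf_dvd_of_nsmul_eq_zero (nsmul_Psi_inr_eq_zero ι e₀)) ?_
  simpa [toZMod_Psi_inr] using addOrderOf_map_dvd (toZMod ι e₀) (Psi 𝔢 (.inr ()))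

theorem card_eq : Nat.card (CompGrp 𝔢) = e₀ * Fintype.card ι + 1 := by
  rw [← addOrderOf_Psi_inr, ← Nat.card_zmultiples, zmultiples_Psi_inr_eq_top,
    AddSubgroup.card_top]

variable {ι e₀}

theorem Psi_inr_eq_neg_nsmul_Psi_inl (i : ι) :
    Psi 𝔢 (.inr ()) = -(Fintype.card ι • Psi 𝔢 (.inl i)) := by
  rw [eq_neg_iff_add_eq_zero, Psi_inl, ← mul_nsmul, add_comm, ← succ_nsmul]
  exact nsmul_Psi_inr_eq_zero ι e₀

theorem zmultiples_Psi_inl_eq_top (i : ι) : AddSubgroup.zmultiples (Psi 𝔢 (.inl i)) = ⊤ := by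
  rw [eq_top_iff, ← zmultiples_Psi_inr_eq_top, AddSubgroup.zmultiples_le,
    Psi_inr_eq_neg_nsmul_Psi_inl i]
  exact neg_mem (AddSubgroup.nsmul_mem _ (AddSubgroup.mem_zmultiples _) _)

theorem Psi_eq_Psi_inr_of_weight_eq {s : ι ⊕ Unit} (h : 𝔢 s = 𝔢 (.inr ())) :
    Psi 𝔢 s = Psi 𝔢 (.inr ()) := by
  rcases s with i | ⟨⟩
  · have he₀ : e₀ = 1 := by simpa [eq_comm] using h
    rw [Psi_inl, he₀, one_nsmul]
  · rfl

theorem eq_id_of_map_Psi_eq_Psi_comp {τ : ι ⊕ Unit → ι ⊕ Unit} (hτ : 𝔢 ∘ τ = 𝔢)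
    {T : CompGrp 𝔢 →+ CompGrp 𝔢} (hT : ∀ s, T (Psi 𝔢 s) = Psi 𝔢 (τ s)) :
    T = AddMonoidHom.id _ := by
  refine AddMonoidHom.eq_of_eqOn_dense (s := {Psi 𝔢 (.inr ())}) ?_ ?_
  · rw [← AddSubgroup.zmultiples_eq_closure, zmultiples_Psi_inr_eq_top]
  · rintro _ rfl
    rw [hT, Psi_eq_Psi_inr_of_weight_eq (congrFun hτ _)]
    rfl

end OneHeavyPoint

end CompGrp

theorem stmt1_general (s₂ e₀ : ℕ) :
    ∀ e : (Fin s₂ ⊕ Unit) → ℤ, e = Sum.elim (fun _ => 1) (fun _ => (e₀ : ℤ)) →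
    ∀ z : Fin s₂ ⊕ Unit, z = Sum.inr () →
    Nat.card (CompGrp e) = e₀ * s₂ + 1 ∧
    AddSubgroup.zmultiples (Psi e z) = ⊤ ∧
    addOrderOf (Psi e z) = e₀ * s₂ + 1 ∧
    (∀ 𝔰 : Fin s₂,
      Psi e (Sum.inl 𝔰) = e₀ • Psi e z ∧
      Psi e z = -(s₂ • Psi e (Sum.inl 𝔰)) ∧
      AddSubgroup.zmultiples (Psi e (Sum.inl 𝔰)) = ⊤) ∧
    (∀ τ : (Fin s₂ ⊕ Unit) ≃ (Fin s₂ ⊕ Unit), e ∘ τ = e →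
      ∀ T : CompGrp e →+ CompGrp e,
        (∀ s, T (Psi e s) = Psi e (τ s)) → T = AddMonoidHom.id (CompGrp e)) := by
  rintro e rfl z rfl
  have hcard : Fintype.card (Fin s₂) = s₂ := Fintype.card_fin s₂
  refine ⟨?_, CompGrp.zmultiples_Psi_inr_eq_top _ _, ?_,
    fun 𝔰 => ⟨CompGrp.Psi_inl 𝔰, ?_, CompGrp.zmultiples_Psi_inl_eq_top 𝔰⟩,
    fun τ hτ T hT => CompGrp.eq_id_of_map_Psi_eq_Psi_comp hτ hT⟩
  · simpa only [hcard] using CompGrp.card_eq (Fin s₂) e₀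
  · simpa only [hcard] using CompGrp.addOrderOf_Psi_inr (Fin s₂) e₀
  · simpa only [hcard] using CompGrp.Psi_inr_eq_neg_nsmul_Psi_inl (e₀ := e₀) 𝔰

/-- `Σ = Σ₂ ⊔ {z}` with `#Σ₂ = s₂ ≥ 1`, `e ≡ 1` on `Σ₂`, `e z = e₀ ∈ {2,3}`.
Then `G(Σ, e)` is cyclic of order `e₀·s₂ + 1` generated by `Ψ z`; for `𝔰 ∈ Σ₂`,
`Ψ 𝔰 = e₀ • Ψ z` and `Ψ z = -(s₂ • Ψ 𝔰)`, so `Ψ 𝔰` also generates; and any bijection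
`τ` with `e ∘ τ = e` induces the identity on `G(Σ, e)`. -/
theorem stmt1 (s₂ e₀ : ℕ) (hs : 1 ≤ s₂) (he : e₀ = 2 ∨ e₀ = 3) :
    ∀ e : (Fin s₂ ⊕ Unit) → ℤ, e = Sum.elim (fun _ => 1) (fun _ => (e₀ : ℤ)) →
    ∀ z : Fin s₂ ⊕ Unit, z = Sum.inr () →
    Nat.card (CompGrp e) = e₀ * s₂ + 1 ∧
    AddSubgroup.zmultiples (Psi e z) = ⊤ ∧
    addOrderOf (Psi e z) = e₀ * s₂ + 1 ∧
    (∀ 𝔰 : Fin s₂,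
      Psi e (Sum.inl 𝔰) = e₀ • Psi e z ∧
      Psi e z = -(s₂ • Psi e (Sum.inl 𝔰)) ∧
      AddSubgroup.zmultiples (Psi e (Sum.inl 𝔰)) = ⊤) ∧
    (∀ τ : (Fin s₂ ⊕ Unit) ≃ (Fin s₂ ⊕ Unit), e ∘ τ = e →
      ∀ T : CompGrp e →+ CompGrp e,
        (∀ s, T (Psi e s) = Psi e (τ s)) → T = AddMonoidHom.id (CompGrp e)) :=
  stmt1_general s₂ e₀
end

section
/- Assume ν ≥ 2. Let τ : Σ → Σ be a bijection with τ(Σ₂) = Σ₂ and τ(w_{2k−1}) = w_{2k}, τ(w_{2k}) = w_{2k−1} for all 1 ≤ k ≤ 2^{ν−1}, and let T : G(Σ, e) → G(Σ, e) be the automorphism determined by T(Ψ_s) = Ψ_{τ(s)}. Define u_{2k−1} := Ψ_{w_{2k−1}} − Ψ_w and u_{2k} := Ψ_{w_{2k−1}} + Ψ_{w_{2k}} − Ψ_w − Ψ_{w'} for 1 ≤ k ≤ 2^{ν−1} − 2, and u_{2^ν−3} := Ψ_{w_{2^ν−3}} − Ψ_w, u_{2^ν−2} := Ψ_{w_{2^ν−3}}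 − Ψ_{w_{2^ν−2}}. Then: T(Ψ_w) = (1 + m)·Ψ_w + Σ_{i=1}^{2^{ν−1}−1} u_{2i}; T(u_{2k−1}) = u_{2k−1} + u_{2k} and T(u_{2k}) = u_{2k} for 1 ≤ k ≤ 2^{ν−1} − 2; T(u_{2^ν−3}) = m·Ψ_w + u_{2^ν−3} + Σ_{i=1}^{2^{ν−1}−2} u_{2i}; and T(u_{2^ν−2}) = u_{2^ν−2}. -/
/-- `Σ = Σ₂ ⊔ Σ₄` with `#Σ₂ = s₂` and `#Σ₄ = 2^ν`. -/
abbrev Sig3 (s₂ ν : ℕ) : Type := Fin s₂ ⊕ Fin (2 ^ ν)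

/-- `e ≡ 1` on `Σ₂` and `e ≡ 2` on `Σ₄`. -/
def e3 (s₂ ν : ℕ) : Sig3 s₂ ν → ℤ := Sum.elim (fun _ => 1) (fun _ => 2)

/-- `w i` (`1`-based): the `i`-th point of `Σ₄ = {w_1, …, w_{2^ν}}`. -/
def wPt (s₂ ν : ℕ) (i : ℕ) : Sig3 s₂ ν :=
  Sum.inr ⟨(i - 1) % 2 ^ ν, Nat.mod_lt _ (by positivity)⟩

/-- The generators `u_j` (`1`-based, `u_0 := Ψ w` with `w = w_{2^ν - 1}`):
for `1 ≤ k ≤ 2^{ν-1} - 2`, `u_{2k-1} = Ψ w_{2k-1} - Ψ w` and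
`u_{2k} = Ψ w_{2k-1} + Ψ w_{2k} - Ψ w - Ψ w'` (with `w' = w_{2^ν}`); and
`u_{2^ν-3} = Ψ w_{2^ν-3} - Ψ w` (the odd-index formula again),
`u_{2^ν-2} = Ψ w_{2^ν-3} - Ψ w_{2^ν-2}`. -/
noncomputable def uGen (s₂ ν : ℕ) : ℕ → CompGrp (e3 s₂ ν) := fun j =>
  if j = 0 then Psi (e3 s₂ ν) (wPt s₂ ν (2 ^ ν - 1))
  else if j = 2 ^ ν - 2 then
    Psi (e3 s₂ ν) (wPt s₂ ν (2 ^ ν - 3)) - Psi (e3 s₂ ν) (wPt s₂ ν (2 ^ ν - 2))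
  else if j % 2 = 1 then
    Psi (e3 s₂ ν) (wPt s₂ ν j) - Psi (e3 s₂ ν) (wPt s₂ ν (2 ^ ν - 1))
  else
    Psi (e3 s₂ ν) (wPt s₂ ν (j - 1)) + Psi (e3 s₂ ν) (wPt s₂ ν j)
      - Psi (e3 s₂ ν) (wPt s₂ ν (2 ^ ν - 1)) - Psi (e3 s₂ ν) (wPt s₂ ν (2 ^ ν))

/-!
In `G(Σ, e)` all `2 • Ψ_s` with `s ∈ Σ₄` coincide, and `Ψ_x = 2 • Ψ_w` for `x ∈ Σ₂`, so the
relation `∑ Ψ_s = 0` expresses `∑_{i ≤ 2^ν - 4} Ψ_{w_i}` through `Ψ` of the last four points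
`w_{2^ν-3}, w_{2^ν-2}, w, w'`. Since `T` just swaps `Ψ_{w_{2k-1}}` and `Ψ_{w_{2k}}`, each claimed
identity is an integral combination of these relations. Writing `2^ν = 4F + 4`, the sum of the
`u_{2i}` carries `2F • (Ψ_w + Ψ_{w'})`; it is the evenness of `2F` that lets the `2`-torsion
relation `2 • Ψ_w = 2 • Ψ_{w'}` absorb it.
-/

lemma zsmul_Psi_eq {S : Type*} [Fintype S] (e : S → ℤ) (s t : S) :
    e s • Psi e s = e t • Psi e t := by
  unfold Psi
  rw [← QuotientAddGroup.mk_zsmul, ← QuotientAddGroup.mk_zsmul, QuotientAddGroup.eq,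
    Finsupp.smul_single, Finsupp.smul_single, smul_eq_mul, smul_eq_mul, mul_one, mul_one,
    neg_add_eq_sub, ← neg_sub, neg_mem_iff]
  exact AddSubgroup.subset_closure (Or.inl ⟨s, t, rfl⟩)

lemma sum_Psi_eq_zero {S : Type*} [Fintype S] (e : S → ℤ) : ∑ s : S, Psi e s = 0 := by
  have h : ((∑ s : S, Finsupp.single s 1 : S →₀ ℤ) : CompGrp e) = 0 :=
    (QuotientAddGroup.eq_zero_iff _).mpr (AddSubgroup.subset_closure (Or.inr rfl))
  rwa [QuotientAddGroup.mk_sum] at h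

lemma sum_Icc_pair_eq_sum_range {M : Type*} [AddCommMonoid M] (g : ℕ → M) (c : ℕ) :
    ∑ i ∈ Finset.Icc 1 c, (g (2 * i - 1) + g (2 * i)) = ∑ j ∈ Finset.range (2 * c), g (j + 1) := by
  induction c with
  | zero => simp
  | succ c ih =>
    rw [Finset.sum_Icc_succ_top (by omega), ih, show 2 * (c + 1) = 2 * c + 1 + 1 by ring,
      Finset.sum_range_succ, Finset.sum_range_succ, show 2 * c + 1 + 1 - 1 = 2 * c + 1 by omega,
      ← add_assoc]

section Sig3

variable {s₂ ν : ℕ}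

noncomputable def psiW (s₂ ν i : ℕ) : CompGrp (e3 s₂ ν) := Psi (e3 s₂ ν) (wPt s₂ ν i)

lemma two_zsmul_psiW_eq (i j : ℕ) : (2 : ℤ) • psiW s₂ ν i = (2 : ℤ) • psiW s₂ ν j :=
  zsmul_Psi_eq (e3 s₂ ν) (wPt s₂ ν i) (wPt s₂ ν j)

lemma Psi_inl_eq (x : Fin s₂) (i : ℕ) : Psi (e3 s₂ ν) (Sum.inl x) = (2 : ℤ) • psiW s₂ ν i := by
  have h : (1 : ℤ) • Psi (e3 s₂ ν) (Sum.inl x) = (2 : ℤ) • psiW s₂ ν i :=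
    zsmul_Psi_eq (e3 s₂ ν) (Sum.inl x) (wPt s₂ ν i)
  rwa [one_smul] at h

lemma Psi_inr_eq (b : Fin (2 ^ ν)) : Psi (e3 s₂ ν) (Sum.inr b) = psiW s₂ ν (b + 1) := by
  simp [psiW, wPt, Nat.mod_eq_of_lt b.isLt]

lemma nsmul_two_zsmul_psiW_add_sum_eq_zero (i : ℕ) :
    s₂ • (2 : ℤ) • psiW s₂ ν i + ∑ j ∈ Finset.range (2 ^ ν), psiW s₂ ν (j + 1) = 0 := by
  have h := sum_Psi_eq_zero (e3 s₂ ν)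
  simp only [Fintype.sum_sum_type, Psi_inl_eq _ i, Psi_inr_eq, Finset.sum_const,
    Finset.card_univ, Fintype.card_fin] at h
  rwa [Fin.sum_univ_eq_sum_range (fun j => psiW s₂ ν (j + 1))] at h

variable {F : ℕ} (hF : 2 ^ ν = 4 * F + 4)
include hF

lemma uGen_zero_eq : uGen s₂ ν 0 = psiW s₂ ν (4 * F + 3) := by
  rw [uGen, if_pos rfl, show 2 ^ ν - 1 = 4 * F + 3 by omega, psiW]

lemma uGen_of_odd {j : ℕ} (hj : j % 2 = 1) :
    uGen s₂ ν j = psiW s₂ ν j - psiW s₂ ν (4 * F + 3) := by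
  rw [uGen, if_neg (by omega), if_neg (by omega), if_pos hj, show 2 ^ ν - 1 = 4 * F + 3 by omega,
    psiW, psiW]

lemma uGen_two_mul_eq {k : ℕ} (hk1 : 1 ≤ k) (hk2 : k ≤ 2 * F) :
    uGen s₂ ν (2 * k) = (psiW s₂ ν (2 * k - 1) + psiW s₂ ν (2 * k))
      - (psiW s₂ ν (4 * F + 3) + psiW s₂ ν (4 * F + 4)) := by
  rw [uGen, if_neg (by omega), if_neg (by omega), if_neg (by omega),
    show 2 ^ ν - 1 = 4 * F + 3 by omega, congrArg (wPt s₂ ν) hF, sub_sub, psiW, psiW, psiW, psiW]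

lemma uGen_four_mul_add_two :
    uGen s₂ ν (4 * F + 2) = psiW s₂ ν (4 * F + 1) - psiW s₂ ν (4 * F + 2) := by
  rw [uGen, if_neg (by omega), if_pos (by omega),
    show 2 ^ ν - 3 = 4 * F + 1 by omega, show 2 ^ ν - 2 = 4 * F + 2 by omega, psiW, psiW]

lemma sum_Icc_uGen_two_mul_eq :
    ∑ i ∈ Finset.Icc 1 (2 * F), uGen s₂ ν (2 * i) =
      -(s₂ • (2 : ℤ) • psiW s₂ ν (4 * F + 3) + psiW s₂ ν (4 * F + 1) + psiW s₂ ν (4 * F + 2)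
        + psiW s₂ ν (4 * F + 3) + psiW s₂ ν (4 * F + 4))
      - (2 * F) • (psiW s₂ ν (4 * F + 3) + psiW s₂ ν (4 * F + 4)) := by
  have hrel := nsmul_two_zsmul_psiW_add_sum_eq_zero (s₂ := s₂) (ν := ν) (4 * F + 3)
  rw [congrArg Finset.range hF, Finset.sum_range_succ, Finset.sum_range_succ, Finset.sum_range_succ,
    Finset.sum_range_succ] at hrel
  rw [Finset.sum_congr rfl fun i hi => uGen_two_mul_eq hF (Finset.mem_Icc.mp hi).1
      (Finset.mem_Icc.mp hi).2, Finset.sum_sub_distrib, sum_Icc_pair_eq_sum_range,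
    Finset.sum_const, Nat.card_Icc, Nat.add_sub_cancel, show 2 * (2 * F) = 4 * F by ring]
  linear_combination (norm := module) hrel

end Sig3

section Action

variable {s₂ ν F : ℕ} {T : CompGrp (e3 s₂ ν) →+ CompGrp (e3 s₂ ν)}
  (hT : ∀ k, 1 ≤ k → k ≤ 2 * F + 2 →
    T (psiW s₂ ν (2 * k - 1)) = psiW s₂ ν (2 * k) ∧ T (psiW s₂ ν (2 * k)) = psiW s₂ ν (2 * k - 1))
include hT

lemma map_psiW_four_mul_add_three :
    T (psiW s₂ ν (4 * F + 3)) = psiW s₂ ν (4 * F + 4) ∧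
      T (psiW s₂ ν (4 * F + 4)) = psiW s₂ ν (4 * F + 3) := by
  have h := hT (2 * F + 2) (by omega) le_rfl
  rwa [show 2 * (2 * F + 2) - 1 = 4 * F + 3 by omega, show 2 * (2 * F + 2) = 4 * F + 4 by ring] at h

lemma map_psiW_four_mul_add_one :
    T (psiW s₂ ν (4 * F + 1)) = psiW s₂ ν (4 * F + 2) ∧
      T (psiW s₂ ν (4 * F + 2)) = psiW s₂ ν (4 * F + 1) := by
  have h := hT (2 * F + 1) (by omega) (by omega)
  rwa [show 2 * (2 * F + 1) - 1 = 4 * F + 1 by omega, show 2 * (2 * F + 1) = 4 * F + 2 by ring] at h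

variable (hF : 2 ^ ν = 4 * F + 4)
include hF

lemma map_uGen_zero :
    T (uGen s₂ ν 0) = (1 + (2 * s₂ + 2 ^ ν)) • uGen s₂ ν 0 +
      ∑ i ∈ Finset.Icc 1 (2 * F + 1), uGen s₂ ν (2 * i) := by
  rw [Finset.sum_Icc_succ_top (by omega), sum_Icc_uGen_two_mul_eq hF,
    show 2 * (2 * F + 1) = 4 * F + 2 by ring, uGen_four_mul_add_two hF, uGen_zero_eq hF,
    (map_psiW_four_mul_add_three hT).1, congrArg (2 * s₂ + ·) hF]
  linear_combination (norm := module) two_zsmul_psiW_eq (4 * F + 2) (4 * F + 3)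
    + ((F : ℤ) + 1) • two_zsmul_psiW_eq (4 * F + 4) (4 * F + 3)

lemma map_uGen_two_mul_sub_one {k : ℕ} (hk1 : 1 ≤ k) (hk2 : k ≤ 2 * F) :
    T (uGen s₂ ν (2 * k - 1)) = uGen s₂ ν (2 * k - 1) + uGen s₂ ν (2 * k) := by
  rw [uGen_of_odd hF (by omega), map_sub, (hT k hk1 (by omega)).1,
    (map_psiW_four_mul_add_three hT).1, uGen_two_mul_eq hF hk1 hk2]
  linear_combination (norm := module) two_zsmul_psiW_eq (4 * F + 3) (2 * k - 1)

lemma map_uGen_two_mul {k : ℕ} (hk1 : 1 ≤ k) (hk2 : k ≤ 2 * F) :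
    T (uGen s₂ ν (2 * k)) = uGen s₂ ν (2 * k) := by
  obtain ⟨hodd, heven⟩ := hT k hk1 (by omega)
  obtain ⟨hw, hw'⟩ := map_psiW_four_mul_add_three hT
  rw [uGen_two_mul_eq hF hk1 hk2, map_sub, map_add, map_add, hodd, heven, hw, hw',
    add_comm (psiW s₂ ν (2 * k)), add_comm (psiW s₂ ν (4 * F + 4))]

lemma map_uGen_four_mul_add_one :
    T (uGen s₂ ν (4 * F + 1)) = (2 * s₂ + 2 ^ ν) • uGen s₂ ν 0 +
      uGen s₂ ν (4 * F + 1) + ∑ i ∈ Finset.Icc 1 (2 * F), uGen s₂ ν (2 * i) := by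
  rw [uGen_of_odd hF (by omega), sum_Icc_uGen_two_mul_eq hF, uGen_zero_eq hF, map_sub,
    (map_psiW_four_mul_add_one hT).1, (map_psiW_four_mul_add_three hT).1, congrArg (2 * s₂ + ·) hF]
  linear_combination (norm := module) two_zsmul_psiW_eq (4 * F + 2) (4 * F + 3)
    + (F : ℤ) • two_zsmul_psiW_eq (4 * F + 4) (4 * F + 3)

lemma map_uGen_four_mul_add_two :
    T (uGen s₂ ν (4 * F + 2)) = uGen s₂ ν (4 * F + 2) := by
  obtain ⟨ha, hb⟩ := map_psiW_four_mul_add_one hT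
  rw [uGen_four_mul_add_two hF, map_sub, ha, hb]
  linear_combination (norm := module) two_zsmul_psiW_eq (4 * F + 2) (4 * F + 1)

end Action

theorem stmt8_general (s₂ ν : ℕ) (hν : 2 ≤ ν)
    (τ : Sig3 s₂ ν ≃ Sig3 s₂ ν)
    (hτ4 : ∀ k : ℕ, 1 ≤ k → k ≤ 2 ^ (ν - 1) →
      τ (wPt s₂ ν (2 * k - 1)) = wPt s₂ ν (2 * k) ∧
      τ (wPt s₂ ν (2 * k)) = wPt s₂ ν (2 * k - 1))
    (T : CompGrp (e3 s₂ ν) →+ CompGrp (e3 s₂ ν))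
    (hT : ∀ s : Sig3 s₂ ν, T (Psi (e3 s₂ ν) s) = Psi (e3 s₂ ν) (τ s)) :
    T (uGen s₂ ν 0) = (1 + (2 * s₂ + 2 ^ ν)) • uGen s₂ ν 0 +
      ∑ i ∈ Finset.Icc 1 (2 ^ (ν - 1) - 1), uGen s₂ ν (2 * i) ∧
    (∀ k : ℕ, 1 ≤ k → k ≤ 2 ^ (ν - 1) - 2 →
      T (uGen s₂ ν (2 * k - 1)) = uGen s₂ ν (2 * k - 1) + uGen s₂ ν (2 * k) ∧
      T (uGen s₂ ν (2 * k)) = uGen s₂ ν (2 * k)) ∧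
    T (uGen s₂ ν (2 ^ ν - 3)) = (2 * s₂ + 2 ^ ν) • uGen s₂ ν 0 +
      uGen s₂ ν (2 ^ ν - 3) + ∑ i ∈ Finset.Icc 1 (2 ^ (ν - 1) - 2), uGen s₂ ν (2 * i) ∧
    T (uGen s₂ ν (2 ^ ν - 2)) = uGen s₂ ν (2 ^ ν - 2) := by
  obtain ⟨F, hF⟩ : ∃ F, 2 ^ (ν - 2) = F + 1 :=
    ⟨_, (Nat.succ_pred_eq_of_pos (by positivity)).symm⟩
  have hν1 : 2 ^ (ν - 1) = 2 * F + 2 := by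
    rw [show ν - 1 = ν - 2 + 1 by omega, pow_succ, hF]; ring
  have hν0 : 2 ^ ν = 4 * F + 4 := by
    rw [show ν = ν - 2 + 2 by omega, pow_add, hF]; ring
  have hswap : ∀ k, 1 ≤ k → k ≤ 2 * F + 2 →
      T (psiW s₂ ν (2 * k - 1)) = psiW s₂ ν (2 * k) ∧
        T (psiW s₂ ν (2 * k)) = psiW s₂ ν (2 * k - 1) := by
    intro k hk1 hk2
    obtain ⟨hodd, heven⟩ := hτ4 k hk1 (hν1 ▸ hk2)
    simp only [psiW, hT, hodd, heven, and_self]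
  rw [show 2 ^ ν - 3 = 4 * F + 1 by omega, show 2 ^ ν - 2 = 4 * F + 2 by omega, hν1,
    show 2 * F + 2 - 1 = 2 * F + 1 by omega, show 2 * F + 2 - 2 = 2 * F by omega]
  exact ⟨map_uGen_zero hswap hν0,
    fun k hk1 hk2 =>
      ⟨map_uGen_two_mul_sub_one hswap hν0 hk1 hk2, map_uGen_two_mul hswap hν0 hk1 hk2⟩,
    map_uGen_four_mul_add_one hswap hν0, map_uGen_four_mul_add_two hswap hν0⟩

/-- for `ν ≥ 2`, if `τ : Σ ≃ Σ` preserves `Σ₂` and swaps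
`w_{2k-1} ↔ w_{2k}` for all `1 ≤ k ≤ 2^{ν-1}`, and `T` is the endomorphism of
`G(Σ, e)` determined by `T (Ψ s) = Ψ (τ s)`, then (with `m = 2s₂ + 2^ν`):
`T (Ψ w) = (1 + m) • Ψ w + ∑_{i=1}^{2^{ν-1}-1} u_{2i}`;
`T u_{2k-1} = u_{2k-1} + u_{2k}` and `T u_{2k} = u_{2k}` for `1 ≤ k ≤ 2^{ν-1} - 2`;
`T u_{2^ν-3} = m • Ψ w + u_{2^ν-3} + ∑_{i=1}^{2^{ν-1}-2} u_{2i}`; and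
`T u_{2^ν-2} = u_{2^ν-2}`. -/
theorem stmt8 (s₂ ν : ℕ) (hν : 2 ≤ ν)
    (τ : Sig3 s₂ ν ≃ Sig3 s₂ ν)
    (hτ2 : ∀ x : Fin s₂, ∃ y : Fin s₂, τ (Sum.inl x) = Sum.inl y)
    (hτ4 : ∀ k : ℕ, 1 ≤ k → k ≤ 2 ^ (ν - 1) →
      τ (wPt s₂ ν (2 * k - 1)) = wPt s₂ ν (2 * k) ∧
      τ (wPt s₂ ν (2 * k)) = wPt s₂ ν (2 * k - 1))
    (T : CompGrp (e3 s₂ ν) →+ CompGrp (e3 s₂ ν))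
    (hT : ∀ s : Sig3 s₂ ν, T (Psi (e3 s₂ ν) s) = Psi (e3 s₂ ν) (τ s)) :
    T (uGen s₂ ν 0) = (1 + (2 * s₂ + 2 ^ ν)) • uGen s₂ ν 0 +
      ∑ i ∈ Finset.Icc 1 (2 ^ (ν - 1) - 1), uGen s₂ ν (2 * i) ∧
    (∀ k : ℕ, 1 ≤ k → k ≤ 2 ^ (ν - 1) - 2 →
      T (uGen s₂ ν (2 * k - 1)) = uGen s₂ ν (2 * k - 1) + uGen s₂ ν (2 * k) ∧
      T (uGen s₂ ν (2 * k)) = uGen s₂ ν (2 * k)) ∧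
    T (uGen s₂ ν (2 ^ ν - 3)) = (2 * s₂ + 2 ^ ν) • uGen s₂ ν 0 +
      uGen s₂ ν (2 ^ ν - 3) + ∑ i ∈ Finset.Icc 1 (2 ^ (ν - 1) - 2), uGen s₂ ν (2 * i) ∧
    T (uGen s₂ ν (2 ^ ν - 2)) = uGen s₂ ν (2 ^ ν - 2) :=
  stmt8_general s₂ ν hν τ hτ4 T hT
end

section
/- Let p be a prime number with p ≡ 1 (mod 4) and let n ≥ 1 be an integer. Then there exists π ∈ ℤ[i] with π·π̄ = p; and for any such π, writing A := ℤ[i]/pⁿℤ[i] and letting C and D denote the images in A of the ideals (πⁿ) and (π̄ⁿ) respectively, the following hold: (i) C and D are each cyclic of order pⁿ as additive groups, C ≠ D, C ∩ D = {0}, and C + D = A; (ii) C and D are stable under multiplication by i, and every additive subgroup of A that is cyclic of order pⁿ and stable under multiplication by i is equal to C or to D. -/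
open Zsqrtd

namespace T3

variable {p : ℕ} {π : GaussianInt}

lemma sq_add_sq (hπ : π * star π = (p : GaussianInt)) :
    π.re * π.re + π.im * π.im = (p : ℤ) := by
  have h := congrArg Zsqrtd.re hπ
  simpa [Zsqrtd.re_mul] using h

lemma norm_pi (hπ : π * star π = (p : GaussianInt)) : π.norm = (p : ℤ) := by
  have : ((Zsqrtd.norm π : ℤ) : GaussianInt) = (((p:ℤ)) : GaussianInt) := by
    rw [Zsqrtd.norm_eq_mul_conj, hπ]; push_cast; ring
  exact_mod_cast this

lemma norm_dvd_norm {x y : GaussianInt} (h : x ∣ y) : x.norm ∣ y.norm := by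
  obtain ⟨k, rfl⟩ := h
  exact ⟨k.norm, (Zsqrtd.norm_mul x k)⟩

lemma core {a b : ℤ} (hp : p.Prime) (hs : a * a + b * b = (p:ℤ)) : ¬ (p:ℤ) ∣ a := by
  intro h
  have hpZ : Prime (p : ℤ) := Nat.prime_iff_prime_int.mp hp
  have hbb : (p:ℤ) ∣ b * b := by
    have hb : b * b = (p:ℤ) - a * a := by linarith
    rw [hb]
    exact dvd_sub dvd_rfl (h.mul_right a)
  have hb : (p:ℤ) ∣ b := hpZ.dvd_of_dvd_pow (n := 2) (by rwa [sq])
  obtain ⟨k, hk⟩ := h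
  obtain ⟨l, hl⟩ := hb
  have hp0 : (p:ℤ) ≠ 0 := Int.natCast_ne_zero.mpr hp.ne_zero
  have h1 : (p:ℤ) * 1 = p * (p * (k * k + l * l)) := by
    rw [mul_one]
    nth_rewrite 1 [← hs]
    rw [hk, hl]; ring
  have : (p:ℤ) ∣ 1 := ⟨_, mul_left_cancel₀ hp0 h1⟩
  have := Int.le_of_dvd one_pos this
  have h2 : (1:ℤ) < p := by exact_mod_cast hp.one_lt
  linarith

lemma p_not_dvd_re (hp : p.Prime) (hπ : π * star π = (p : GaussianInt)) :
    ¬ (p : ℤ) ∣ π.re := core hp (sq_add_sq hπ)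

lemma p_not_dvd_im (hp : p.Prime) (hπ : π * star π = (p : GaussianInt)) :
    ¬ (p : ℤ) ∣ π.im := core hp (by rw [add_comm]; exact sq_add_sq hπ)

lemma ndvd (hp : p.Prime) (hp4 : p % 4 = 1) (hπ : π * star π = (p : GaussianInt)) :
    ¬ π ∣ star π := by
  intro h
  have h2 : π ∣ ((2 * π.re : ℤ) : GaussianInt) := by
    have he : ((2 * π.re : ℤ) : GaussianInt) = π + star π := by
      ext <;> simp <;> ring
    rw [he]
    exact dvd_add dvd_rfl h
  have h3 : (p:ℤ) ∣ (2 * π.re) * (2 * π.re) := by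
    have := norm_dvd_norm h2
    rw [norm_pi hπ] at this
    simpa [Zsqrtd.norm_def] using this
  have hpZ : Prime (p : ℤ) := Nat.prime_iff_prime_int.mp hp
  have h4 : (p:ℤ) ∣ 2 * π.re := hpZ.dvd_of_dvd_pow (n := 2) (by rwa [sq])
  rcases hpZ.dvd_mul.mp h4 with h5 | h5
  · have : p ∣ 2 := by exact_mod_cast h5
    have := Nat.le_of_dvd (by norm_num) this
    interval_cases p <;> simp_all
  · exact p_not_dvd_re hp hπ h5

lemma ndvd' (hp : p.Prime) (hp4 : p % 4 = 1) (hπ : π * star π = (p : GaussianInt)) :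
    ¬ star π ∣ π := by
  intro h
  apply ndvd hp hp4 hπ
  have := map_dvd (starRingEnd GaussianInt) h
  simpa [starRingEnd_apply] using this

set_option synthInstance.maxHeartbeats 1000000 in
instance : DecompositionMonoid GaussianInt := inferInstance

lemma hπ' (hπ : π * star π = (p : GaussianInt)) :
    star π * star (star π) = (p : GaussianInt) := by
  rw [star_star, mul_comm]; exact hπ

lemma prime_pi' (hp : p.Prime) (hπ : π * star π = (p : GaussianInt)) : Prime π := by
  rw [← irreducible_iff_prime]
  constructor
  · intro hu
    have := Zsqrtd.norm_eq_one_iff.mpr hu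
    rw [norm_pi hπ] at this
    simp at this
    exact hp.ne_one this
  · intro a b hab
    have hnorm : (a.norm.natAbs) * (b.norm.natAbs) = p := by
      have : π.norm = a.norm * b.norm := by rw [hab, Zsqrtd.norm_mul]
      rw [norm_pi hπ] at this
      have := congrArg Int.natAbs this.symm
      simpa [Int.natAbs_mul] using this
    rcases hp.eq_one_or_self_of_dvd _ ⟨_, hnorm.symm⟩ with h | h
    · exact Or.inl (Zsqrtd.norm_eq_one_iff.mp h)
    · right
      apply Zsqrtd.norm_eq_one_iff.mp
      have hp0 : p ≠ 0 := hp.ne_zero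
      have h2 : p * b.norm.natAbs = p * 1 := by
        rw [mul_one]; conv_lhs => rw [← h]
        exact hnorm
      exact (Nat.eq_of_mul_eq_mul_left (Nat.pos_of_ne_zero hp0) h2)

lemma coprime (hp : p.Prime) (hp4 : p % 4 = 1) (hπ : π * star π = (p : GaussianInt)) :
    IsCoprime π (star π) :=
  ((prime_pi' hp hπ).coprime_iff_not_dvd).mpr (ndvd hp hp4 hπ)

lemma star_dvd_p (hπ : π * star π = (p : GaussianInt)) : star π ∣ (p : GaussianInt) :=
  ⟨π, by rw [← hπ]; ring⟩

lemma star_not_dvd_int (hp : p.Prime) (hπ : π * star π = (p : GaussianInt)) (z : ℤ)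
    (hz : ¬ (p:ℤ) ∣ z) : ¬ star π ∣ (z : GaussianInt) := by
  intro h
  apply hz
  have := norm_dvd_norm h
  rw [Zsqrtd.norm_conj, norm_pi hπ] at this
  have h2 : (p:ℤ) ∣ z * z := by simpa [Zsqrtd.norm_def] using this
  exact (Nat.prime_iff_prime_int.mp hp).dvd_of_dvd_pow (n := 2) (by rwa [sq])

lemma decomp (z : GaussianInt) (c : ℤ) :
    z - ((z.re + z.im * c : ℤ) : GaussianInt) = (z.im : GaussianInt) * (Zsqrtd.sqrtd - (c : GaussianInt)) := by
  ext <;> simp <;> ring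

lemma level1 (hp : p.Prime) (hp4 : p % 4 = 1) (hπ : π * star π = (p : GaussianInt))
    (z : GaussianInt) : ∃ e : ℤ, star π ∣ (z - (e : GaussianInt)) := by
  -- Bezout for im and p
  have hco : IsCoprime ((p:ℤ)) π.im :=
    ((Nat.prime_iff_prime_int.mp hp).coprime_iff_not_dvd).mpr (p_not_dvd_im hp hπ)
  obtain ⟨s, t, hst⟩ := hco
  -- star π ∣ sqrtd - t * re
  have key : (π.im : GaussianInt) * (Zsqrtd.sqrtd - ((t * π.re : ℤ) : GaussianInt)) =
      -(star π) + ((π.re * s : ℤ) : GaussianInt) * ((p : GaussianInt)) := by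
    ext <;> simp <;> linear_combination (-π.re) * hst
  have hdvd : star π ∣ (π.im : GaussianInt) * (Zsqrtd.sqrtd - ((t * π.re : ℤ) : GaussianInt)) := by
    rw [key]
    exact dvd_add (dvd_neg.mpr dvd_rfl) ((star_dvd_p hπ).mul_left _)
  have hc0 : star π ∣ (Zsqrtd.sqrtd - ((t * π.re : ℤ) : GaussianInt)) := by
    have hprime := prime_pi' hp (hπ' hπ)
    exact ((hprime.2.2 _ _ hdvd).resolve_left (star_not_dvd_int hp hπ _ (p_not_dvd_im hp hπ)))
  refine ⟨z.re + z.im * (t * π.re), ?_⟩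
  rw [decomp]
  exact hc0.mul_left _

lemma exists_int_cong (hp : p.Prime) (hp4 : p % 4 = 1) (hπ : π * star π = (p : GaussianInt))
    (k : ℕ) : ∃ c : ℤ, (star π) ^ k ∣ (Zsqrtd.sqrtd - (c : GaussianInt)) := by
  induction k with
  | zero => exact ⟨0, by simp⟩
  | succ k ih =>
    obtain ⟨c, hc⟩ := ih
    obtain ⟨d, hd⟩ := hc
    obtain ⟨u, w, huw⟩ := coprime hp hp4 hπ
    obtain ⟨e, he⟩ := level1 hp hp4 hπ (u ^ k * d)
    refine ⟨c + (p:ℤ) ^ k * e, ?_⟩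
    have hpk : (star π) ^ k * π ^ k = ((p : GaussianInt)) ^ k := by
      rw [← mul_pow, mul_comm (star π) π, hπ]
    have h1 : Zsqrtd.sqrtd - ((c + (p:ℤ) ^ k * e : ℤ) : GaussianInt) =
        (star π) ^ k * (d - π ^ k * (e : GaussianInt)) := by
      push_cast
      rw [mul_sub, ← hd, ← mul_assoc, hpk]
      push_cast
      ring
    rw [h1, pow_succ]
    have h2 : d - π ^ k * (e : GaussianInt) =
        d * (1 - (u * π) ^ k) + π ^ k * (u ^ k * d - e) := by ring
    have h30 : star π ∣ 1 - u * π := ⟨w, by linear_combination (-1 : GaussianInt) * huw⟩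
    have h3 : star π ∣ 1 - (u * π) ^ k :=
      dvd_trans h30 (by simpa using sub_dvd_pow_sub_pow 1 (u * π) k)
    exact mul_dvd_mul_left _ (h2 ▸ dvd_add (h3.mul_left d) (he.mul_left _))

variable {n : ℕ}

lemma pi_pow_mul (hπ : π * star π = (p : GaussianInt)) :
    π ^ n * (star π) ^ n = (p : GaussianInt) ^ n := by
  rw [← mul_pow, hπ]

lemma gen_dvd (hp : p.Prime) (hp4 : p % 4 = 1) (hπ : π * star π = (p : GaussianInt))
    (x : GaussianInt) :
    ∃ m : ℤ, ((p : GaussianInt)) ^ n ∣ x * π ^ n - (m : GaussianInt) * π ^ n := by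
  obtain ⟨c, hc⟩ := exists_int_cong hp hp4 hπ n
  refine ⟨x.re + x.im * c, ?_⟩
  have h2 : (star π) ^ n ∣ x - ((x.re + x.im * c : ℤ) : GaussianInt) := by
    rw [decomp]; exact hc.mul_left _
  obtain ⟨d, hd⟩ := h2
  refine ⟨d, ?_⟩
  calc x * π ^ n - ((x.re + x.im * c : ℤ) : GaussianInt) * π ^ n
      = (x - ((x.re + x.im * c : ℤ) : GaussianInt)) * π ^ n := by ring
    _ = ((star π) ^ n * d) * π ^ n := by rw [← hd]
    _ = (π ^ n * (star π) ^ n) * d := by ring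
    _ = (p : GaussianInt) ^ n * d := by rw [pi_pow_mul hπ]

lemma isAddCyclic_zmultiples {G : Type*} [AddGroup G] (a : G) :
    IsAddCyclic (AddSubgroup.zmultiples a) := by
  constructor
  refine ⟨⟨a, AddSubgroup.mem_zmultiples a⟩, ?_⟩
  rintro ⟨x, hx⟩
  obtain ⟨k, hk⟩ := AddSubgroup.mem_zmultiples_iff.mp hx
  exact ⟨k, Subtype.ext (by simpa using hk)⟩

lemma map_eq_zmultiples (hp : p.Prime) (hp4 : p % 4 = 1)
    (hπ : π * star π = (p : GaussianInt)) :
    ((Ideal.span {π ^ n}).map (Ideal.Quotient.mk (Ideal.span {(p : GaussianInt) ^ n}))).toAddSubgroup =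
      AddSubgroup.zmultiples (Ideal.Quotient.mk (Ideal.span {(p : GaussianInt) ^ n}) (π ^ n)) := by
  ext x
  rw [Submodule.mem_toAddSubgroup, Ideal.map_span, Set.image_singleton,
    Ideal.mem_span_singleton, AddSubgroup.mem_zmultiples_iff]
  constructor
  · rintro ⟨r, hr⟩
    obtain ⟨y, rfl⟩ := Ideal.Quotient.mk_surjective r
    obtain ⟨m, hm⟩ := gen_dvd (n := n) hp hp4 hπ y
    refine ⟨m, ?_⟩
    have h1 : x = Ideal.Quotient.mk _ (y * π ^ n) := by rw [hr, map_mul, mul_comm]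
    have h2 : Ideal.Quotient.mk (Ideal.span {(p : GaussianInt) ^ n}) (y * π ^ n) =
        Ideal.Quotient.mk _ ((m : GaussianInt) * π ^ n) := by
      rw [Ideal.Quotient.eq, Ideal.mem_span_singleton]
      exact hm
    rw [h1, h2, zsmul_eq_mul, map_mul, map_intCast]
  · rintro ⟨m, rfl⟩
    exact ⟨(m : GaussianInt ⧸ Ideal.span {(p : GaussianInt) ^ n}),
      by rw [zsmul_eq_mul, mul_comm]⟩

lemma p_ne_zero' (hp : p.Prime) : ((p : GaussianInt)) ≠ 0 := by
  intro h
  have : (p : ℤ) = 0 := by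
    have := congrArg Zsqrtd.re h
    simpa using this
  exact_mod_cast hp.ne_zero (by exact_mod_cast this)

lemma addOrderOf_g (hp : p.Prime) (hp4 : p % 4 = 1)
    (hπ : π * star π = (p : GaussianInt)) (hn : 1 ≤ n) :
    addOrderOf (Ideal.Quotient.mk (Ideal.span {(p : GaussianInt) ^ n}) (π ^ n)) = p ^ n := by
  obtain ⟨m, rfl⟩ : ∃ m, n = m + 1 := ⟨n - 1, (Nat.succ_pred_eq_of_pos hn).symm⟩
  set I := Ideal.span {(p : GaussianInt) ^ (m + 1)}
  set g := Ideal.Quotient.mk I (π ^ (m + 1)) with hg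
  have hg1 : (p ^ (m + 1) : ℕ) • g = 0 := by
    rw [nsmul_eq_mul, hg, ← map_natCast (Ideal.Quotient.mk I), ← map_mul,
      Ideal.Quotient.eq_zero_iff_mem, Ideal.mem_span_singleton]
    push_cast
    exact Dvd.intro _ rfl
  have hdvd : addOrderOf g ∣ p ^ (m + 1) := addOrderOf_dvd_of_nsmul_eq_zero hg1
  obtain ⟨k, hk, hkeq⟩ := (Nat.dvd_prime_pow hp).mp hdvd
  rcases Nat.lt_or_ge k (m + 1) with hlt | hge
  · exfalso
    have h0 : (p ^ m : ℕ) • g = 0 := by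
      apply addOrderOf_dvd_iff_nsmul_eq_zero.mp
      rw [hkeq]
      exact pow_dvd_pow p (Nat.lt_succ_iff.mp hlt)
    rw [nsmul_eq_mul, hg, ← map_natCast (Ideal.Quotient.mk I), ← map_mul,
      Ideal.Quotient.eq_zero_iff_mem, Ideal.mem_span_singleton] at h0
    have h1 : ((p : GaussianInt)) ^ m * (p : GaussianInt) ∣ ((p : GaussianInt)) ^ m * π ^ (m + 1) := by
      have : ((p ^ m : ℕ) : GaussianInt) = ((p : GaussianInt)) ^ m := by push_cast; ring
      rw [← pow_succ]
      rwa [this] at h0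
    have h2 : (p : GaussianInt) ∣ π ^ (m + 1) :=
      (mul_dvd_mul_iff_left (pow_ne_zero m (p_ne_zero' hp))).mp h1
    have h3 : star π ∣ π ^ (m + 1) := dvd_trans (star_dvd_p hπ) h2
    exact ndvd' hp hp4 hπ ((prime_pi' hp (hπ' hπ)).dvd_of_dvd_pow h3)
  · have : k = m + 1 := le_antisymm hk hge
    rw [hkeq, this]

lemma sqrtd_mul_sqrtd : (Zsqrtd.sqrtd : GaussianInt) * Zsqrtd.sqrtd = -1 := by
  ext <;> simp

lemma star_sqrtd : star (Zsqrtd.sqrtd : GaussianInt) = -Zsqrtd.sqrtd := by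
  ext <;> simp

lemma not_dvd_two_sqrtd (hp : p.Prime) (hp4 : p % 4 = 1)
    (hπ : π * star π = (p : GaussianInt)) : ¬ π ∣ 2 * Zsqrtd.sqrtd := by
  intro h
  have h2 := norm_dvd_norm h
  rw [norm_pi hπ] at h2
  have h4 : (p:ℤ) ∣ 4 := by simpa [Zsqrtd.norm_def] using h2
  have h5 : p ∣ 4 := by exact_mod_cast h4
  have h6 := Nat.le_of_dvd (by norm_num) h5
  have h7 := hp.two_le
  interval_cases p <;> omega

lemma crucial {q w y : GaussianInt} (hprime : Prime π)
    (hpn : (p : GaussianInt) ^ n = π ^ n * q ^ n) (hq : q ≠ 0)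
    (h1 : q ^ n ∣ w) (h2 : ¬ π ∣ w) (h3 : (p : GaussianInt) ^ n ∣ w * y) :
    π ^ n ∣ y := by
  obtain ⟨d, hd⟩ := h1
  have hπd : ¬ π ∣ d := fun h => h2 (hd ▸ h.mul_left _)
  have h4 : q ^ n * π ^ n ∣ q ^ n * (d * y) := by
    rw [mul_comm (q ^ n) (π ^ n), ← hpn]
    have he : q ^ n * (d * y) = w * y := by rw [hd]; ring
    rw [he]
    exact h3
  have h5 : π ^ n ∣ d * y := (mul_dvd_mul_iff_left (pow_ne_zero n hq)).mp h4
  exact hprime.pow_dvd_of_dvd_mul_left n hπd h5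

end T3


open T3 in
set_option maxHeartbeats 2000000 in
/-- for a prime `p ≡ 1 (mod 4)` and `n ≥ 1`, there is `π ∈ ℤ[i]` with
`π·π̄ = p`; and for any such `π`, in `A = ℤ[i]/pⁿℤ[i]` the images `C`, `D` of the
ideals `(πⁿ)` and `(π̄ⁿ)` are additive subgroups that are cyclic of order `pⁿ`,
distinct, with `C ⊓ D = ⊥` and `C ⊔ D = ⊤`; they are stable under multiplication by
`i`, and any additive subgroup of `A` that is cyclic of order `pⁿ` and stable under
multiplication by `i` equals `C` or `D`. -/
theorem stmt17 (p : ℕ) (hp : p.Prime) (hp4 : p % 4 = 1) (n : ℕ) (hn : 1 ≤ n) :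
    (∃ π : GaussianInt, π * star π = (p : GaussianInt)) ∧
    ∀ π : GaussianInt, π * star π = (p : GaussianInt) →
      ∀ I : Ideal GaussianInt, I = Ideal.span {(p : GaussianInt) ^ n} →
      ∀ C D : AddSubgroup (GaussianInt ⧸ I),
        C = ((Ideal.span {π ^ n}).map (Ideal.Quotient.mk I)).toAddSubgroup →
        D = ((Ideal.span {(star π) ^ n}).map (Ideal.Quotient.mk I)).toAddSubgroup →
        -- (i)
        (IsAddCyclic C ∧ Nat.card C = p ^ n ∧
         IsAddCyclic D ∧ Nat.card D = p ^ n ∧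
         C ≠ D ∧ C ⊓ D = ⊥ ∧ C ⊔ D = ⊤) ∧
        -- (ii)
        ((∀ x ∈ C, Ideal.Quotient.mk I Zsqrtd.sqrtd * x ∈ C) ∧
         (∀ x ∈ D, Ideal.Quotient.mk I Zsqrtd.sqrtd * x ∈ D) ∧
         (∀ H : AddSubgroup (GaussianInt ⧸ I), IsAddCyclic H → Nat.card H = p ^ n →
            (∀ x ∈ H, Ideal.Quotient.mk I Zsqrtd.sqrtd * x ∈ H) →
            H = C ∨ H = D)) := by
  have hn0 : n ≠ 0 := by omega
  constructor
  · -- existence of π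
    haveI : Fact p.Prime := ⟨hp⟩
    obtain ⟨a, b, hab⟩ := Nat.Prime.sq_add_sq (p := p) (by omega)
    have hab' : ((a:ℤ)) ^ 2 + (b:ℤ) ^ 2 = (p:ℤ) := by exact_mod_cast hab
    refine ⟨⟨(a:ℤ), (b:ℤ)⟩, ?_⟩
    ext
    · simp [Zsqrtd.re_mul]
      linear_combination hab'
    · simp [Zsqrtd.im_mul]
      ring
  · intro π hπ I hI C D hC hD
    subst hI hC hD
    have hπ2 : star π * star (star π) = (p : GaussianInt) := hπ' hπ
    have hprime : Prime π := prime_pi' hp hπ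
    have hprime2 : Prime (star π) := prime_pi' hp hπ2
    have hCz := map_eq_zmultiples (n := n) hp hp4 hπ
    have hDz := map_eq_zmultiples (n := n) hp hp4 hπ2
    have hog := addOrderOf_g hp hp4 hπ hn
    have hogD := addOrderOf_g hp hp4 hπ2 hn
    set Iq : Ideal GaussianInt := Ideal.span {(p : GaussianInt) ^ n} with hIq
    have cardC : Nat.card
        (((Ideal.span {π ^ n}).map (Ideal.Quotient.mk Iq)).toAddSubgroup) = p ^ n := by
      rw [hCz, Nat.card_zmultiples, hog]
    have cardD : Nat.card
        (((Ideal.span {(star π) ^ n}).map (Ideal.Quotient.mk Iq)).toAddSubgroup) = p ^ n := by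
      rw [hDz, Nat.card_zmultiples, hogD]
    have hppow : π ^ n * (star π) ^ n = (p : GaussianInt) ^ n := pi_pow_mul hπ
    have hpdvdspan : (star π) ^ n ∣ (p : GaussianInt) ^ n := ⟨π ^ n, by rw [← hppow]; ring⟩
    have hpdvdspan' : π ^ n ∣ (p : GaussianInt) ^ n := ⟨(star π) ^ n, by rw [← hppow]⟩
    have hcop : IsCoprime (π ^ n) ((star π) ^ n) := (coprime hp hp4 hπ).pow
    refine ⟨⟨?_, cardC, ?_, cardD, ?_, ?_, ?_⟩, ?_, ?_, ?_⟩
    · rw [hCz]; exact isAddCyclic_zmultiples _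
    · rw [hDz]; exact isAddCyclic_zmultiples _
    · -- C ≠ D
      intro hEq
      have hgC : Ideal.Quotient.mk Iq (π ^ n) ∈
          ((Ideal.span {π ^ n}).map (Ideal.Quotient.mk Iq)).toAddSubgroup := by
        rw [Submodule.mem_toAddSubgroup]
        exact Ideal.mem_map_of_mem _ (Ideal.mem_span_singleton.mpr dvd_rfl)
      rw [hEq, Submodule.mem_toAddSubgroup,
        Ideal.mem_map_iff_of_surjective _ Ideal.Quotient.mk_surjective] at hgC
      obtain ⟨z, hz, hzeq⟩ := hgC
      rw [Ideal.mem_span_singleton] at hz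
      have h2 : π ^ n - z ∈ Iq := Ideal.Quotient.eq.mp hzeq.symm
      rw [Ideal.mem_span_singleton] at h2
      have h3 : (star π) ^ n ∣ π ^ n := by
        have : π ^ n = z + (π ^ n - z) := by ring
        rw [this]
        exact dvd_add hz (dvd_trans hpdvdspan h2)
      exact ndvd' hp hp4 hπ
        (hprime2.dvd_of_dvd_pow (dvd_trans (dvd_pow_self (star π) hn0) h3))
    · -- inf = bot
      rw [eq_bot_iff]
      intro x hx
      rw [AddSubgroup.mem_inf, Submodule.mem_toAddSubgroup, Submodule.mem_toAddSubgroup,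
        Ideal.mem_map_iff_of_surjective _ Ideal.Quotient.mk_surjective,
        Ideal.mem_map_iff_of_surjective _ Ideal.Quotient.mk_surjective] at hx
      obtain ⟨⟨y, hy, hyx⟩, ⟨y', hy', hyx'⟩⟩ := hx
      rw [Ideal.mem_span_singleton] at hy hy'
      have hsub : (p : GaussianInt) ^ n ∣ y' - y := by
        rw [← Ideal.mem_span_singleton]
        exact Ideal.Quotient.eq.mp (hyx'.trans hyx.symm)
      have hsdvd : (star π) ^ n ∣ y := by
        have : y = y' - (y' - y) := by ring
        rw [this]
        exact dvd_sub hy' (dvd_trans hpdvdspan hsub)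
      have : (p : GaussianInt) ^ n ∣ y := by
        rw [← hppow]
        exact hcop.mul_dvd hy hsdvd
      rw [AddSubgroup.mem_bot, ← hyx, Ideal.Quotient.eq_zero_iff_mem,
        Ideal.mem_span_singleton]
      exact this
    · -- sup = top
      rw [eq_top_iff]
      intro x _
      obtain ⟨y, rfl⟩ := Ideal.Quotient.mk_surjective x
      obtain ⟨u, v, huv⟩ := hcop
      have hx : Ideal.Quotient.mk Iq y =
          Ideal.Quotient.mk Iq (y * (u * π ^ n)) + Ideal.Quotient.mk Iq (y * (v * (star π) ^ n)) := by
        rw [← map_add]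
        exact congrArg _ (by linear_combination y * huv.symm)
      rw [hx]
      refine AddSubgroup.add_mem _ (AddSubgroup.mem_sup_left ?_) (AddSubgroup.mem_sup_right ?_)
      · rw [Submodule.mem_toAddSubgroup]
        exact Ideal.mem_map_of_mem _ (Ideal.mem_span_singleton.mpr ⟨y * u, by ring⟩)
      · rw [Submodule.mem_toAddSubgroup]
        exact Ideal.mem_map_of_mem _ (Ideal.mem_span_singleton.mpr ⟨y * v, by ring⟩)
    · -- C stable
      intro x hx
      rw [Submodule.mem_toAddSubgroup] at hx ⊢
      exact Ideal.mul_mem_left _ _ hx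
    · -- D stable
      intro x hx
      rw [Submodule.mem_toAddSubgroup] at hx ⊢
      exact Ideal.mul_mem_left _ _ hx
    · -- uniqueness
      intro H hHcyc hHcard hHstab
      haveI := hHcyc
      haveI hHfin : Finite H := Nat.finite_of_card_ne_zero
        (by rw [hHcard]; exact pow_ne_zero n hp.ne_zero)
      obtain ⟨h, hh⟩ := IsAddCyclic.exists_generator (α := H)
      set x0 : GaussianInt ⧸ Iq := (h : GaussianInt ⧸ Iq) with hx0
      have horder : addOrderOf x0 = p ^ n := by
        rw [hx0, AddSubgroup.addOrderOf_coe,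
          addOrderOf_eq_card_of_forall_mem_zmultiples hh, hHcard]
      have hih : Ideal.Quotient.mk Iq Zsqrtd.sqrtd * x0 ∈ H := hHstab _ h.2
      obtain ⟨c, hc⟩ := AddSubgroup.mem_zmultiples_iff.mp (hh ⟨_, hih⟩)
      have h2cv : c • x0 = Ideal.Quotient.mk Iq Zsqrtd.sqrtd * x0 := congrArg Subtype.val hc
      have hcv : ((c : ℤ) : GaussianInt ⧸ Iq) * x0 = Ideal.Quotient.mk Iq Zsqrtd.sqrtd * x0 := by
        rw [← zsmul_eq_mul]
        exact h2cv
      have hs2 : Ideal.Quotient.mk Iq Zsqrtd.sqrtd * Ideal.Quotient.mk Iq Zsqrtd.sqrtd = -1 := by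
        rw [← map_mul, sqrtd_mul_sqrtd, map_neg, map_one]
      have hc2 : ((c * c + 1 : ℤ) : GaussianInt ⧸ Iq) * x0 = 0 := by
        push_cast
        linear_combination (((c : ℤ) : GaussianInt ⧸ Iq) + Ideal.Quotient.mk Iq Zsqrtd.sqrtd) * hcv
          + x0 * hs2
      have hdvdint : ((p : ℤ)) ^ n ∣ (c * c + 1) := by
        have h1 : ((addOrderOf x0 : ℕ) : ℤ) ∣ (c * c + 1) := by
          rw [addOrderOf_dvd_iff_zsmul_eq_zero, zsmul_eq_mul]
          exact hc2
        rw [horder] at h1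
        exact_mod_cast h1
      obtain ⟨k, hk⟩ := hdvdint
      have hZi : (p : GaussianInt) ^ n ∣
          (((c : ℤ) : GaussianInt) + Zsqrtd.sqrtd) * (((c : ℤ) : GaussianInt) - Zsqrtd.sqrtd) := by
        refine ⟨((k : ℤ) : GaussianInt), ?_⟩
        have hkc : ((c : ℤ) : GaussianInt) * ((c : ℤ) : GaussianInt) + 1 =
            ((p : GaussianInt)) ^ n * ((k : ℤ) : GaussianInt) := by
          have := congrArg (fun z : ℤ => (z : GaussianInt)) hk
          push_cast at this
          exact_mod_cast this
        linear_combination hkc - sqrtd_mul_sqrtd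
      have hπdvdpn : π ∣ (p : GaussianInt) ^ n := dvd_pow ⟨star π, hπ.symm⟩ hn0
      obtain ⟨y, hy⟩ := Ideal.Quotient.mk_surjective x0
      have hpy : (p : GaussianInt) ^ n ∣ (Zsqrtd.sqrtd - ((c : ℤ) : GaussianInt)) * y := by
        have h1 : Ideal.Quotient.mk Iq (Zsqrtd.sqrtd * y - ((c : ℤ) : GaussianInt) * y) = 0 := by
          rw [map_sub, map_mul, map_mul, map_intCast, hy, ← hcv]
          ring
        rw [Ideal.Quotient.eq_zero_iff_mem, Ideal.mem_span_singleton] at h1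
        have : (Zsqrtd.sqrtd - ((c : ℤ) : GaussianInt)) * y =
            Zsqrtd.sqrtd * y - ((c : ℤ) : GaussianInt) * y := by ring
        rw [this]
        exact h1
      have hfinC : Finite (((Ideal.span {π ^ n}).map (Ideal.Quotient.mk Iq)).toAddSubgroup) :=
        Nat.finite_of_card_ne_zero (by rw [cardC]; exact pow_ne_zero n hp.ne_zero)
      have hfinD : Finite (((Ideal.span {(star π) ^ n}).map (Ideal.Quotient.mk Iq)).toAddSubgroup) :=
        Nat.finite_of_card_ne_zero (by rw [cardD]; exact pow_ne_zero n hp.ne_zero)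
      rcases hprime.2.2 _ _ (dvd_trans hπdvdpn hZi) with hcase | hcase
      · -- π ∣ c + i  → H = C
        left
        have hnot : ¬ π ∣ (((c : ℤ) : GaussianInt) - Zsqrtd.sqrtd) := by
          intro hcon
          apply not_dvd_two_sqrtd hp hp4 hπ
          have := dvd_sub hcase hcon
          have he : (((c : ℤ) : GaussianInt) + Zsqrtd.sqrtd) -
              (((c : ℤ) : GaussianInt) - Zsqrtd.sqrtd) = 2 * Zsqrtd.sqrtd := by ring
          rwa [he] at this
        have hfull : π ^ n ∣ (((c : ℤ) : GaussianInt) + Zsqrtd.sqrtd) :=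
          hprime.pow_dvd_of_dvd_mul_right n hnot (dvd_trans hpdvdspan' hZi)
        have hstarfull : (star π) ^ n ∣ (Zsqrtd.sqrtd - ((c : ℤ) : GaussianInt)) := by
          have h1 := map_dvd (starRingEnd GaussianInt) hfull
          simp only [map_pow, map_add, starRingEnd_apply, star_sqrtd, star_intCast] at h1
          have he : ((c : ℤ) : GaussianInt) + -Zsqrtd.sqrtd =
              -(Zsqrtd.sqrtd - ((c : ℤ) : GaussianInt)) := by ring
          rw [he, dvd_neg] at h1
          exact h1
        have hπw : ¬ π ∣ (Zsqrtd.sqrtd - ((c : ℤ) : GaussianInt)) := by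
          intro hcon
          apply hnot
          have := dvd_neg.mpr hcon
          have he : -(Zsqrtd.sqrtd - ((c : ℤ) : GaussianInt)) =
              ((c : ℤ) : GaussianInt) - Zsqrtd.sqrtd := by ring
          rwa [he] at this
        have hyC : π ^ n ∣ y :=
          crucial hprime hppow.symm hprime2.ne_zero hstarfull hπw hpy
        have hx0C : x0 ∈ ((Ideal.span {π ^ n}).map (Ideal.Quotient.mk Iq)).toAddSubgroup := by
          rw [Submodule.mem_toAddSubgroup, ← hy]
          exact Ideal.mem_map_of_mem _ (Ideal.mem_span_singleton.mpr hyC)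
        have hle : H ≤ ((Ideal.span {π ^ n}).map (Ideal.Quotient.mk Iq)).toAddSubgroup := by
          intro z hz
          obtain ⟨m, hm⟩ := AddSubgroup.mem_zmultiples_iff.mp (hh ⟨z, hz⟩)
          have hmv : m • x0 = z := congrArg Subtype.val hm
          rw [← hmv]
          exact AddSubgroup.zsmul_mem _ hx0C m
        exact AddSubgroup.eq_of_le_of_card_ge hle (by rw [cardC, hHcard])
      · -- π ∣ c - i  → H = D
        right
        have hnot : ¬ π ∣ (((c : ℤ) : GaussianInt) + Zsqrtd.sqrtd) := by
          intro hcon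
          apply not_dvd_two_sqrtd hp hp4 hπ
          have := dvd_sub hcon hcase
          have he : (((c : ℤ) : GaussianInt) + Zsqrtd.sqrtd) -
              (((c : ℤ) : GaussianInt) - Zsqrtd.sqrtd) = 2 * Zsqrtd.sqrtd := by ring
          rwa [he] at this
        have hfull : π ^ n ∣ (((c : ℤ) : GaussianInt) - Zsqrtd.sqrtd) :=
          hprime.pow_dvd_of_dvd_mul_left n hnot (dvd_trans hpdvdspan' hZi)
        have hfull' : π ^ n ∣ (Zsqrtd.sqrtd - ((c : ℤ) : GaussianInt)) := by
          have := dvd_neg.mpr hfull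
          have he : -(((c : ℤ) : GaussianInt) - Zsqrtd.sqrtd) =
              Zsqrtd.sqrtd - ((c : ℤ) : GaussianInt) := by ring
          rwa [he] at this
        have hsw : ¬ star π ∣ (Zsqrtd.sqrtd - ((c : ℤ) : GaussianInt)) := by
          intro hcon
          have hπdvd : π ∣ (Zsqrtd.sqrtd - ((c : ℤ) : GaussianInt)) :=
            dvd_trans (dvd_pow_self π hn0) hfull'
          have hpdvd : (p : GaussianInt) ∣ (Zsqrtd.sqrtd - ((c : ℤ) : GaussianInt)) := by
            rw [← hπ]
            exact (coprime hp hp4 hπ).mul_dvd hπdvd hcon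
          have him : (p : ℤ) ∣ (Zsqrtd.sqrtd - ((c : ℤ) : GaussianInt)).im := by
            have : (((p : ℤ)) : GaussianInt) ∣ (Zsqrtd.sqrtd - ((c : ℤ) : GaussianInt)) := by
              push_cast
              exact hpdvd
            exact ((Zsqrtd.intCast_dvd _ _).mp this).2
          have h1 : (p:ℤ) ∣ 1 := by simpa using him
          have h2 : p ∣ 1 := by exact_mod_cast h1
          have h3 := Nat.le_of_dvd one_pos h2
          have h4 := hp.two_le
          omega
        have hyD : (star π) ^ n ∣ y :=
          crucial hprime2 (by rw [mul_comm]; exact hppow.symm) hprime.ne_zero hfull' hsw hpy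
        have hx0D : x0 ∈ ((Ideal.span {(star π) ^ n}).map (Ideal.Quotient.mk Iq)).toAddSubgroup := by
          rw [Submodule.mem_toAddSubgroup, ← hy]
          exact Ideal.mem_map_of_mem _ (Ideal.mem_span_singleton.mpr hyD)
        have hle : H ≤ ((Ideal.span {(star π) ^ n}).map (Ideal.Quotient.mk Iq)).toAddSubgroup := by
          intro z hz
          obtain ⟨m, hm⟩ := AddSubgroup.mem_zmultiples_iff.mp (hh ⟨z, hz⟩)
          have hmv : m • x0 = z := congrArg Subtype.val hm
          rw [← hmv]
          exact AddSubgroup.zsmul_mem _ hx0D m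
        exact AddSubgroup.eq_of_le_of_card_ge hle (by rw [cardD, hHcard])
end

section
/- Let p be a prime number with p ≡ 1 (mod 4), let π ∈ ℤ[i] satisfy π·π̄ = p, and let n ≥ 1 be an integer. In A := ℤ[i]/p^{n+1}ℤ[i], let C_{n+1} denote the image of the ideal (π̄^{n+1}). Then the pⁿ-torsion subgroup {x ∈ C_{n+1} : pⁿ·x = 0} equals the image in A of the ideal (π·π̄^{n+1}); moreover, multiplication by p induces an isomorphism of additive groups from the image of (π̄ⁿ) in ℤ[i]/pⁿℤ[i] onto this pⁿ-torsion subgroup. -/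
open Ideal

private lemma stmt19_mem_map_span {R : Type*} [CommRing R] {b g : R} (hdvd : g ∣ b)
    (a : R) :
    Ideal.Quotient.mk (span {b}) a ∈ (span {g}).map (Ideal.Quotient.mk (span {b})) ↔
      g ∣ a := by
  rw [Ideal.mem_quotient_iff_mem_sup,
    sup_eq_left.mpr (Ideal.span_singleton_le_span_singleton.mpr hdvd),
    Ideal.mem_span_singleton]

private lemma stmt19_coprime (p : ℕ) (hp : p.Prime) (hp4 : p % 4 = 1)
    (π : GaussianInt) (hπ : π * star π = (p : GaussianInt)) :
    IsCoprime π (star π) := by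
  have hnorm : π.norm = (p : ℤ) := by
    have h := Zsqrtd.norm_eq_mul_conj π
    rw [hπ] at h
    exact_mod_cast h
  have hp5 : 5 ≤ p := by have := hp.two_le; omega
  have hpz : Prime (p : ℤ) := Nat.prime_iff_prime_int.mp hp
  have hirr : Irreducible π := by
    constructor
    · intro hu
      have h1 := Zsqrtd.norm_eq_one_iff.mpr hu
      rw [hnorm] at h1
      simp only [Int.natAbs_natCast] at h1
      omega
    · intro a b hab
      have hmul : a.norm.natAbs * b.norm.natAbs = p := by
        have h2 : (a * b).norm = (p : ℤ) := by rw [← hab, hnorm]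
        rw [Zsqrtd.norm_mul] at h2
        have h3 := congrArg Int.natAbs h2
        rwa [Int.natAbs_mul, Int.natAbs_natCast] at h3
      rcases hp.eq_one_or_self_of_dvd a.norm.natAbs ⟨b.norm.natAbs, hmul.symm⟩ with h | h
      · exact Or.inl (Zsqrtd.norm_eq_one_iff.mp h)
      · right
        apply Zsqrtd.norm_eq_one_iff.mp
        rw [h] at hmul
        have h2 : p * b.norm.natAbs = p * 1 := by rw [mul_one]; exact hmul
        exact Nat.eq_of_mul_eq_mul_left (by omega) h2
  rw [hirr.coprime_iff_not_dvd]
  intro hdvd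
  have hsum : π + star π = ((2 * π.re : ℤ) : GaussianInt) := by
    ext <;> simp [Zsqrtd.re_star, Zsqrtd.im_star] <;> ring
  have h2 : π ∣ ((2 * π.re : ℤ) : GaussianInt) := hsum ▸ dvd_add dvd_rfl hdvd
  obtain ⟨c, hc⟩ := h2
  have hnd : (p : ℤ) ∣ (2 * π.re) * (2 * π.re) := by
    refine ⟨c.norm, ?_⟩
    have h3 := congrArg Zsqrtd.norm hc
    rwa [Zsqrtd.norm_mul, Zsqrtd.norm_intCast, hnorm] at h3
  have hpre : (p : ℤ) ∣ π.re := by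
    rcases hpz.dvd_mul.mp hnd with h | h <;>
    · rcases hpz.dvd_mul.mp h with h' | h'
      · exfalso
        have := Int.le_of_dvd (by norm_num) h'
        omega
      · exact h'
  have hnormdef : (p : ℤ) = π.re * π.re + π.im * π.im := by
    rw [← hnorm, Zsqrtd.norm_def]; ring
  have hpim : (p : ℤ) ∣ π.im := by
    have hsum2 : (p : ℤ) ∣ π.re * π.re + π.im * π.im := ⟨1, by rw [mul_one]; exact hnormdef.symm⟩
    have hre2 : (p : ℤ) ∣ π.re * π.re := hpre.mul_left π.re
    have him2 : (p : ℤ) ∣ π.im * π.im := by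
      have := dvd_sub hsum2 hre2
      simpa using this
    rcases hpz.dvd_mul.mp him2 with h | h <;> exact h
  obtain ⟨u, hu⟩ := hpre
  obtain ⟨v, hv⟩ := hpim
  have key : (p : ℤ) * 1 = (p : ℤ) * ((p : ℤ) * (u * u + v * v)) := by
    conv_lhs => rw [mul_one, hnormdef]
    rw [hu, hv]; ring
  have h1 : (1 : ℤ) = p * (u * u + v * v) := by
    have hp0 : (p : ℤ) ≠ 0 := by exact_mod_cast hp.ne_zero
    exact mul_left_cancel₀ hp0 key
  have := Int.le_of_dvd one_pos ⟨u * u + v * v, h1⟩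
  omega

set_option maxHeartbeats 1000000 in
set_option synthInstance.maxHeartbeats 1000000 in
/-- let `p ≡ 1 (mod 4)` be prime, `π ∈ ℤ[i]` with `π·π̄ = p`, and
`n ≥ 1`. In `A = ℤ[i]/p^{n+1}ℤ[i]`, let `C_{n+1}` be the image of the ideal
`(π̄^{n+1})`. Then the `pⁿ`-torsion subgroup `{x ∈ C_{n+1} : pⁿ • x = 0}` equals the
image in `A` of the ideal `(π·π̄^{n+1})`; and multiplication by `p` induces an
isomorphism of additive groups from the image `Cₙ` of `(π̄ⁿ)` in `ℤ[i]/pⁿℤ[i]` onto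
this `pⁿ`-torsion subgroup. -/
theorem stmt19 (p : ℕ) (hp : p.Prime) (hp4 : p % 4 = 1)
    (π : GaussianInt) (hπ : π * star π = (p : GaussianInt)) (n : ℕ) (hn : 1 ≤ n) :
    ∀ I : Ideal GaussianInt, I = Ideal.span {(p : GaussianInt) ^ (n + 1)} →
    ∀ J : Ideal GaussianInt, J = Ideal.span {(p : GaussianInt) ^ n} →
    ∀ Cn1 : AddSubgroup (GaussianInt ⧸ I),
      Cn1 = ((Ideal.span {(star π) ^ (n + 1)}).map (Ideal.Quotient.mk I)).toAddSubgroup →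
    ∀ Tors : AddSubgroup (GaussianInt ⧸ I),
      Tors = Cn1 ⊓ AddMonoidHom.ker (zsmulAddGroupHom ((p : ℤ) ^ n)) →
    ∀ Cn : AddSubgroup (GaussianInt ⧸ J),
      Cn = ((Ideal.span {(star π) ^ n}).map (Ideal.Quotient.mk J)).toAddSubgroup →
    -- the `pⁿ`-torsion subgroup of `C_{n+1}` is the image of the ideal `(π·π̄^{n+1})`
    Tors = ((Ideal.span {π * (star π) ^ (n + 1)}).map (Ideal.Quotient.mk I)).toAddSubgroup ∧
    -- multiplication by `p` induces an isomorphism `Cₙ ≃+ Tors`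
    ∃ φ : Cn ≃+ Tors,
      ∀ (y : GaussianInt) (hy : Ideal.Quotient.mk J y ∈ Cn),
        (φ ⟨Ideal.Quotient.mk J y, hy⟩ : GaussianInt ⧸ I) =
          Ideal.Quotient.mk I ((p : GaussianInt) * y) := by
  intro I hI J hJ Cn1 hCn1 Tors hTors Cn hCn
  subst hI hJ hCn1 hTors hCn
  have hq0 : (p : GaussianInt) ≠ 0 := Nat.cast_ne_zero.mpr hp.ne_zero
  have hcop : IsCoprime π (star π) := stmt19_coprime p hp hp4 π hπ
  have hd1 : (star π) ^ (n + 1) ∣ (p : GaussianInt) ^ (n + 1) := by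
    rw [← hπ, mul_pow]; exact dvd_mul_left _ _
  have hd2 : π * (star π) ^ (n + 1) ∣ (p : GaussianInt) ^ (n + 1) := by
    rw [← hπ, mul_pow]; exact ⟨π ^ n, by ring⟩
  have hd3 : (star π) ^ n ∣ (p : GaussianInt) ^ n := by
    rw [← hπ, mul_pow]; exact dvd_mul_left _ _
  -- kernel condition
  have hker : ∀ a : GaussianInt,
      ((p : ℤ) ^ n • Ideal.Quotient.mk (span {(p : GaussianInt) ^ (n + 1)}) a = 0) ↔
        (p : GaussianInt) ∣ a := by
    intro a
    rw [zsmul_eq_mul,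
      ← map_intCast (Ideal.Quotient.mk (span {(p : GaussianInt) ^ (n + 1)})) ((p : ℤ) ^ n),
      ← _root_.map_mul, Ideal.Quotient.eq_zero_iff_mem, Ideal.mem_span_singleton]
    have hcast : (((p : ℤ) ^ n : ℤ) : GaussianInt) = (p : GaussianInt) ^ n := by push_cast; ring
    rw [hcast, pow_succ]
    exact mul_dvd_mul_iff_left (pow_ne_zero n hq0)
  -- divisibility equivalence
  have hiff : ∀ a : GaussianInt,
      ((star π) ^ (n + 1) ∣ a ∧ (p : GaussianInt) ∣ a) ↔ π * (star π) ^ (n + 1) ∣ a := by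
    intro a
    constructor
    · rintro ⟨⟨b, rfl⟩, hqa⟩
      have hπp : π ∣ (p : GaussianInt) := ⟨star π, hπ.symm⟩
      have hπa : π ∣ (star π) ^ (n + 1) * b := hπp.trans hqa
      obtain ⟨c, rfl⟩ := (hcop.pow_right (n := n + 1)).dvd_of_dvd_mul_left hπa
      exact ⟨c, by ring⟩
    · rintro ⟨c, rfl⟩
      exact ⟨⟨π * c, by ring⟩, by rw [← hπ]; exact ⟨(star π) ^ n * c, by ring⟩⟩
  -- claim 1
  have h1 : (((span {(star π) ^ (n + 1)}).map
        (Ideal.Quotient.mk (span {(p : GaussianInt) ^ (n + 1)}))).toAddSubgroup ⊓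
        AddMonoidHom.ker (zsmulAddGroupHom ((p : ℤ) ^ n))) =
      ((span {π * (star π) ^ (n + 1)}).map
        (Ideal.Quotient.mk (span {(p : GaussianInt) ^ (n + 1)}))).toAddSubgroup := by
    ext x
    obtain ⟨a, rfl⟩ := Ideal.Quotient.mk_surjective x
    simp only [AddSubgroup.mem_inf, Submodule.mem_toAddSubgroup, AddMonoidHom.mem_ker,
      zsmulAddGroupHom_apply, stmt19_mem_map_span hd1, stmt19_mem_map_span hd2, hker a]
    exact hiff a
  refine ⟨h1, ?_⟩
  -- the map F : ℤ[i]/(pⁿ) → ℤ[i]/(p^{n+1}), x ↦ p x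
  have hle : span {(p : GaussianInt) ^ n} ≤
      Submodule.comap ((p : GaussianInt) • (LinearMap.id : GaussianInt →ₗ[GaussianInt] GaussianInt))
        (span {(p : GaussianInt) ^ (n + 1)}) := by
    intro x hx
    rw [Ideal.mem_span_singleton] at hx
    simp only [Submodule.mem_comap, LinearMap.smul_apply, LinearMap.id_coe, id_eq,
      smul_eq_mul, Ideal.mem_span_singleton, pow_succ']
    exact mul_dvd_mul_left (p : GaussianInt) hx
  set F := Submodule.mapQ (span {(p : GaussianInt) ^ n}) (span {(p : GaussianInt) ^ (n + 1)})
    ((p : GaussianInt) • (LinearMap.id : GaussianInt →ₗ[GaussianInt] GaussianInt)) hle with hF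
  have Fapp : ∀ a : GaussianInt,
      F (Ideal.Quotient.mk (span {(p : GaussianInt) ^ n}) a) =
        Ideal.Quotient.mk (span {(p : GaussianInt) ^ (n + 1)}) ((p : GaussianInt) * a) := by
    intro a
    show F (Submodule.Quotient.mk a) = _
    rw [hF, Submodule.mapQ_apply]
    rfl
  have hmemT : ∀ x : ((span {(star π) ^ n}).map
      (Ideal.Quotient.mk (span {(p : GaussianInt) ^ n}))).toAddSubgroup,
      F.toAddMonoidHom ((AddSubgroup.subtype _) x) ∈
        (((span {(star π) ^ (n + 1)}).map
          (Ideal.Quotient.mk (span {(p : GaussianInt) ^ (n + 1)}))).toAddSubgroup ⊓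
          AddMonoidHom.ker (zsmulAddGroupHom ((p : ℤ) ^ n))) := by
    rintro ⟨x, hx⟩
    rw [Submodule.mem_toAddSubgroup,
      Ideal.mem_map_iff_of_surjective _ Ideal.Quotient.mk_surjective] at hx
    obtain ⟨a, ha, rfl⟩ := hx
    rw [Ideal.mem_span_singleton] at ha
    obtain ⟨c, rfl⟩ := ha
    rw [h1]
    simp only [AddSubgroup.coe_subtype, LinearMap.toAddMonoidHom_coe]
    rw [Fapp, Submodule.mem_toAddSubgroup, stmt19_mem_map_span hd2]
    rw [← hπ]
    exact ⟨c, by ring⟩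
  set g : (((span {(star π) ^ n}).map
        (Ideal.Quotient.mk (span {(p : GaussianInt) ^ n}))).toAddSubgroup) →+
      ((((span {(star π) ^ (n + 1)}).map
        (Ideal.Quotient.mk (span {(p : GaussianInt) ^ (n + 1)}))).toAddSubgroup ⊓
        AddMonoidHom.ker (zsmulAddGroupHom ((p : ℤ) ^ n))) :
        AddSubgroup (GaussianInt ⧸ span {(p : GaussianInt) ^ (n + 1)})) :=
    AddMonoidHom.codRestrict (F.toAddMonoidHom.comp (AddSubgroup.subtype _)) _ hmemT with hg
  have hFinj : Function.Injective F := by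
    intro u v huv
    obtain ⟨a, rfl⟩ := Ideal.Quotient.mk_surjective u
    obtain ⟨b, rfl⟩ := Ideal.Quotient.mk_surjective v
    rw [Fapp, Fapp, Ideal.Quotient.mk_eq_mk_iff_sub_mem, ← mul_sub,
      Ideal.mem_span_singleton, pow_succ'] at huv
    rw [Ideal.Quotient.mk_eq_mk_iff_sub_mem, Ideal.mem_span_singleton]
    exact (mul_dvd_mul_iff_left hq0).mp huv
  have hbij : Function.Bijective g := by
    constructor
    · intro x y hxy
      apply Subtype.ext
      apply hFinj
      have := congrArg (Subtype.val) hxy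
      simpa [hg] using this
    · rintro ⟨x, hx⟩
      rw [h1, Submodule.mem_toAddSubgroup,
        Ideal.mem_map_iff_of_surjective _ Ideal.Quotient.mk_surjective] at hx
      obtain ⟨a, ha, rfl⟩ := hx
      rw [Ideal.mem_span_singleton] at ha
      obtain ⟨c, rfl⟩ := ha
      have hy : Ideal.Quotient.mk (span {(p : GaussianInt) ^ n}) ((star π) ^ n * c) ∈
          ((span {(star π) ^ n}).map
            (Ideal.Quotient.mk (span {(p : GaussianInt) ^ n}))).toAddSubgroup := by
        rw [Submodule.mem_toAddSubgroup]
        exact Ideal.mem_map_of_mem _ (Ideal.mem_span_singleton.mpr ⟨c, rfl⟩)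
      refine ⟨⟨_, hy⟩, ?_⟩
      apply Subtype.ext
      show F (Ideal.Quotient.mk (span {(p : GaussianInt) ^ n}) ((star π) ^ n * c)) = _
      rw [Fapp]
      congr 1
      rw [← hπ]
      ring
  refine ⟨AddEquiv.ofBijective g hbij, ?_⟩
  intro y hy
  show F (Ideal.Quotient.mk (span {(p : GaussianInt) ^ n}) y) = _
  rw [Fapp]
end
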